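/- For the two-vertex spatial Moran process, if c and r are not simultaneously equal to 1 and a ∈ [min(1,r)/(r+1), max(1,r)/(r+1)], then choosing the selection parameter m = (a(r+1) − r)/(a(r+1)(1−c) + c − r) yields fixation probability exactly r/(r+1), the Moran fixation probability. -/

import Mathlib

/-!
Write `x = a (r + 1)`, `N = x - r`, `M = 1 - x` and `D = N + c M`, so that `m = N / D` and
`1 - m = c M / D`. Both denominators of `F` then factor through `1 - r`:
`m c + r (1 - m) = c x (1 - r) / D` and `(1 - m) / c + r m = (r + 1) (1 - r) (1 - a) / D`,
and the two summands of `F` collapse to `r M / ((r + 1)(1 - r))` and `r N / ((r + 1)(1 - r))`,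
whose sum is `r / (r + 1)` because `M + N = 1 - r`. The hypothesis on `a` says exactly that `x`
lies between `r` and `1`, so `N` and `M` have the same sign and `D ≠ 0`. At `r = 1` the interval
for `a` is the point `1 / 2`, where `m = 0`.
-/

/-- The fixation probability `F(m, a | c, r)` of the two-vertex spatial Moran process. -/
def twoVertexFixation {K : Type*} [Field K] (c r a m : K) : K :=
  r * a * (1 - m) / (m * c + r * (1 - m)) + r * m * (1 - a) / ((1 - m) / c + r * m)

theorem twoVertexFixation_eq_moran {K : Type*} [Field K] {c r a m : K}
    (hc : c ≠ 0) (ha₀ : a ≠ 0) (ha₁ : a ≠ 1) (hr : r + 1 ≠ 0) (hr₁ : r ≠ 1)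
    (hD : a * (r + 1) - r + c * (1 - a * (r + 1)) ≠ 0)
    (hm : m = (a * (r + 1) - r) / (a * (r + 1) - r + c * (1 - a * (r + 1)))) :
    twoVertexFixation c r a m = r / (r + 1) := by
  set D := a * (r + 1) - r + c * (1 - a * (r + 1))
  have h1r : 1 - r ≠ 0 := sub_ne_zero.2 hr₁.symm
  have h1a : 1 - a ≠ 0 := sub_ne_zero.2 ha₁.symm
  have hden₁ : m * c + r * (1 - m) = c * (a * (r + 1) * (1 - r)) / D := by
    rw [hm]; field_simp; ring
  have hden₂ : (1 - m) / c + r * m = (r + 1) * (1 - r) * (1 - a) / D := by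
    rw [hm]; field_simp; ring
  rw [twoVertexFixation, hden₁, hden₂, hm]
  field_simp
  ring

section OrderedField

variable {K : Type*} [Field K] [LinearOrder K] [IsStrictOrderedRing K]

theorem add_mul_ne_zero_of_mul_nonneg {N M c : K} (hc : 0 < c) (hNM : 0 ≤ N * M)
    (h : N + M ≠ 0) : N + c * M ≠ 0 := by
  intro h'
  have hN : N = -(c * M) := by linarith
  have hcMM : c * (M * M) ≤ 0 := by rw [hN] at hNM; linarith
  have hM : M = 0 := mul_self_eq_zero.1 <|
    le_antisymm (nonpos_of_mul_nonpos_right hcMM hc) (mul_self_nonneg M)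
  exact h (by rw [hN, hM]; ring)

theorem sub_mul_sub_nonneg_of_mem_uIcc {x r : K} (hx : x ∈ Set.uIcc 1 r) :
    0 ≤ (x - r) * (1 - x) := by
  rcases Set.mem_uIcc.1 hx with ⟨h₁, h₂⟩ | ⟨h₁, h₂⟩ <;> nlinarith

end OrderedField

theorem twoVertex_nonstationary_moran_fixation_general (c r a m : ℝ)
    (hc : 0 < c) (hr : 0 < r)
    (ha : min 1 r / (r + 1) ≤ a) (ha' : a ≤ max 1 r / (r + 1))
    (hm : m = (a * (r + 1) - r) / (a * (r + 1) * (1 - c) + c - r)) :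
    r * a * (1 - m) / (m * c + r * (1 - m)) + r * m * (1 - a) / ((1 - m) / c + r * m)
      = r / (r + 1) := by
  have hr₀ : 0 < r + 1 := by linarith
  have hx : a * (r + 1) ∈ Set.uIcc 1 r := by
    rw [div_le_iff₀ hr₀] at ha
    rw [le_div_iff₀ hr₀] at ha'
    exact ⟨ha, ha'⟩
  rw [show a * (r + 1) * (1 - c) + c - r = a * (r + 1) - r + c * (1 - a * (r + 1)) by ring] at hm
  rcases eq_or_ne r 1 with rfl | hr₁
  · have hx₁ : a * (1 + 1) = 1 := by simpa using hx
    have hm₀ : m = 0 := by rw [hm, hx₁, sub_self, zero_div]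
    rw [hm₀, show a = 1 / 2 by linarith]
    norm_num
  · have hx₀ : 0 < a * (r + 1) := lt_of_lt_of_le (lt_min one_pos hr) hx.1
    have hxr : a * (r + 1) < r + 1 := lt_of_le_of_lt hx.2 (max_lt (by linarith) (by linarith))
    have hD := add_mul_ne_zero_of_mul_nonneg hc (sub_mul_sub_nonneg_of_mem_uIcc hx)
      (fun h => hr₁ (by linarith))
    exact twoVertexFixation_eq_moran hc.ne' (pos_of_mul_pos_left hx₀ hr₀.le).ne'
      (by rintro rfl; linarith) hr₀.ne' hr₁ hD hm

/-- For the two-vertex spatial Moran process with fixation probability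
`F(m,a | c,r) = r·a·(1−m)/(m·c + r(1−m)) + r·m·(1−a)/((1−m)/c + r·m)`, if `c` and `r` are not
simultaneously equal to `1` and `a ∈ [min(1,r)/(r+1), max(1,r)/(r+1)]`, then choosing the
selection parameter `m = (a(r+1) − r)/(a(r+1)(1−c) + c − r)` yields fixation probability
exactly `r/(r+1)`, the Moran fixation probability. -/
theorem twoVertex_nonstationary_moran_fixation (c r a m : ℝ)
    (hc : 0 < c) (hr : 0 < r) (hcr : ¬(c = 1 ∧ r = 1))
    (ha : min 1 r / (r + 1) ≤ a) (ha' : a ≤ max 1 r / (r + 1))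
    (hm : m = (a * (r + 1) - r) / (a * (r + 1) * (1 - c) + c - r)) :
    r * a * (1 - m) / (m * c + r * (1 - m)) + r * m * (1 - a) / ((1 - m) / c + r * m)
      = r / (r + 1) :=
  twoVertex_nonstationary_moran_fixation_general c r a m hc hr ha ha' hm
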